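/- arXiv:2411.02230 — 2 statements merged into one kernel-verified Lean document; each statement's English description precedes it below -/
import Mathlib

section
/- Let E be a finite-dimensional real inner product space, W ⊆ E a measurable set, and φ : E → ℝ a nonnegative function such that φ, q ↦ φ(q) • q, and q ↦ φ(q)‖q‖² are all integrable on W. Set M = ∫_W φ(q) dq, assume M > 0, and set C = M⁻¹ • ∫_W φ(q) • q dq. Then the function F(p) = ∫_W (1/2)‖q − p‖² φ(q) dq has, at every point p ∈ E, the gradient M • (p − C); i.e., HasGradientAt F (M • (p − C)) p for every p. -/
open MeasureTheory InnerProductSpace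

/-!
Expanding `½‖q - p‖² = ½‖q‖² - ⟪q, p⟫ + ½‖p‖²` under the integral shows that the cost is the
quadratic `c - ⟪∫ φ q • q, p⟫ + (M / 2)‖p‖²` in `p`, whose gradient `M • p - ∫ φ q • q` is
`M • (p - C)` because `∫ φ q • q = M • C`.
-/

section

variable {E : Type*} [NormedAddCommGroup E] [InnerProductSpace ℝ E]

theorem hasGradientAt_sub_inner_add_mul_norm_sq [CompleteSpace E] (a m : ℝ) (b p : E) :
    HasGradientAt (fun x : E => a - ⟪b, x⟫_ℝ + m / 2 * ‖x‖ ^ 2) (m • p - b) p := by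
  rw [hasGradientAt_iff_hasFDerivAt]
  refine (((hasFDerivAt_const a p).fun_sub (innerSL ℝ b).hasFDerivAt).fun_add
    ((hasStrictFDerivAt_norm_sq p).hasFDerivAt.const_mul (m / 2))).congr_fderiv ?_
  ext v
  simp only [zero_sub, add_apply, neg_apply, sub_apply, smul_apply, coe_innerSL_apply,
    nsmul_eq_mul, Nat.cast_ofNat, smul_eq_mul, map_sub, map_smul, toDual_apply_apply]
  ring

theorem half_norm_sub_sq_mul_eq (φ : ℝ) (p q : E) :
    1 / 2 * ‖q - p‖ ^ 2 * φ = 1 / 2 * (φ * ‖q‖ ^ 2) - ⟪φ • q, p⟫_ℝ + ‖p‖ ^ 2 / 2 * φ := by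
  rw [norm_sub_sq_real, real_inner_smul_left]
  ring

theorem integral_half_norm_sub_sq_mul [CompleteSpace E] [MeasurableSpace E] {μ : Measure E}
    {φ : E → ℝ} (hφ : Integrable φ μ) (hφq : Integrable (fun q => φ q • q) μ)
    (hφq2 : Integrable (fun q => φ q * ‖q‖ ^ 2) μ) (p : E) :
    ∫ q, 1 / 2 * ‖q - p‖ ^ 2 * φ q ∂μ =
      1 / 2 * ∫ q, φ q * ‖q‖ ^ 2 ∂μ - ⟪∫ q, φ q • q ∂μ, p⟫_ℝ + (∫ q, φ q ∂μ) / 2 * ‖p‖ ^ 2 := by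
  have hinner : Integrable (fun q => ⟪φ q • q, p⟫_ℝ) μ := hφq.inner_const p
  have hdiff : Integrable (fun q => 1 / 2 * (φ q * ‖q‖ ^ 2) - ⟪φ q • q, p⟫_ℝ) μ :=
    (hφq2.const_mul _).sub hinner
  simp_rw [half_norm_sub_sq_mul_eq]
  rw [integral_add hdiff (hφ.const_mul _), integral_sub (hφq2.const_mul _) hinner,
    integral_const_mul, integral_const_mul]
  simp_rw [real_inner_comm p]
  rw [integral_inner hφq]
  ring

end

theorem locational_cost_gradient_general
    {E : Type*} [NormedAddCommGroup E] [InnerProductSpace ℝ E]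
    [FiniteDimensional ℝ E] [MeasurableSpace E] [BorelSpace E]
    (W : Set E)
    (φ : E → ℝ)
    (hφint : IntegrableOn φ W)
    (hφqint : IntegrableOn (fun q => φ q • q) W)
    (hφq2int : IntegrableOn (fun q => φ q * ‖q‖ ^ 2) W)
    (M : ℝ) (hM : M = ∫ q in W, φ q) (hMpos : 0 < M)
    (C : E) (hC : C = M⁻¹ • ∫ q in W, φ q • q) :
    ∀ p : E,
      HasGradientAt (fun p : E => ∫ q in W, (1 / 2 : ℝ) * ‖q - p‖ ^ 2 * φ q)
        (M • (p - C)) p := by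
  intro p
  have hMC : M • C = ∫ q in W, φ q • q := by
    rw [hC, smul_inv_smul₀ hMpos.ne']
  simp_rw [integral_half_norm_sub_sq_mul hφint hφqint hφq2int, ← hM]
  rw [smul_sub, hMC]
  exact hasGradientAt_sub_inner_add_mul_norm_sq _ M _ p

/-- Gradient of the locational cost of a cell W with density φ: at every p, the
gradient is M • (p − C) (move-to-centroid law, Theorem 2 of the paper). -/
theorem locational_cost_gradient
    {E : Type*} [NormedAddCommGroup E] [InnerProductSpace ℝ E]
    [FiniteDimensional ℝ E] [MeasurableSpace E] [BorelSpace E]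
    (W : Set E) (hW : MeasurableSet W)
    (φ : E → ℝ) (hφ : ∀ q, 0 ≤ φ q)
    (hφint : IntegrableOn φ W)
    (hφqint : IntegrableOn (fun q => φ q • q) W)
    (hφq2int : IntegrableOn (fun q => φ q * ‖q‖ ^ 2) W)
    (M : ℝ) (hM : M = ∫ q in W, φ q) (hMpos : 0 < M)
    (C : E) (hC : C = M⁻¹ • ∫ q in W, φ q • q) :
    ∀ p : E,
      HasGradientAt (fun p : E => ∫ q in W, (1 / 2 : ℝ) * ‖q - p‖ ^ 2 * φ q)
        (M • (p - C)) p :=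
  locational_cost_gradient_general W φ hφint hφqint hφq2int M hM hMpos C hC
end

section
/- Let E be a finite-dimensional real inner product space, W ⊆ E a measurable set, and φ : E → ℝ a nonnegative function such that φ, q ↦ φ(q) • q, and q ↦ φ(q)‖q‖² are all integrable on W. Set M = ∫_W φ(q) dq, assume M > 0, and set C = M⁻¹ • ∫_W φ(q) • q dq. Let k_p ≥ 0 and let p : ℝ → E be a differentiable function satisfying p'(t) = k_p • (C − p(t)) for all t. Then the function h(t) = ∫_W (1/2)‖q − p(t)‖² φ(q) dq is differentiable with h'(t) = −k_p · M · ‖C − p(t)‖² for all t; in particular h is monotonically nonincreasing. -/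
/-!
Expanding the square, the locational cost about a point `x` is its value about the centroid
`C` plus `(M / 2) ‖x - C‖²` (parallel axis theorem), since the first moment about `C` vanishes.
Along `ṗ = k_p (C - p)` the derivative of `(M / 2) ‖p - C‖²` is
`M ⟪p - C, k_p (C - p)⟫ = -k_p M ‖C - p‖²`.
-/

open MeasureTheory

open scoped RealInnerProductSpace

section SecondMoment

variable {E : Type*} [NormedAddCommGroup E] [InnerProductSpace ℝ E] [CompleteSpace E]
  [MeasurableSpace E] {μ : Measure E} {φ : E → ℝ}

theorem integral_norm_sub_sq_mul (hφ : Integrable φ μ)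
    (hφq : Integrable (fun q => φ q • q) μ) (hφq2 : Integrable (fun q => φ q * ‖q‖ ^ 2) μ)
    (x : E) :
    ∫ q, ‖q - x‖ ^ 2 * φ q ∂μ
      = ∫ q, φ q * ‖q‖ ^ 2 ∂μ - 2 * ⟪x, ∫ q, φ q • q ∂μ⟫ + ‖x‖ ^ 2 * ∫ q, φ q ∂μ := by
  have hexpand : ∀ q, ‖q - x‖ ^ 2 * φ q
      = φ q * ‖q‖ ^ 2 - 2 * ⟪x, φ q • q⟫ + ‖x‖ ^ 2 * φ q := fun q => by
    rw [norm_sub_sq_real, real_inner_smul_right, real_inner_comm]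
    ring
  have hinner : Integrable (fun q => ⟪x, φ q • q⟫) μ := (innerSL ℝ x).integrable_comp hφq
  simp_rw [hexpand]
  rw [integral_add (f := fun q => φ q * ‖q‖ ^ 2 - 2 * ⟪x, φ q • q⟫)
      (hφq2.sub (hinner.const_mul 2)) (hφ.const_mul _),
    integral_sub hφq2 (hinner.const_mul 2), integral_const_mul, integral_const_mul,
    integral_inner hφq]

theorem integral_norm_sub_sq_mul_eq_of_centroid (hφ : Integrable φ μ)
    (hφq : Integrable (fun q => φ q • q) μ) (hφq2 : Integrable (fun q => φ q * ‖q‖ ^ 2) μ)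
    {c : E} (hc : ∫ q, φ q • q ∂μ = (∫ q, φ q ∂μ) • c) (x : E) :
    ∫ q, ‖q - x‖ ^ 2 * φ q ∂μ
      = ∫ q, ‖q - c‖ ^ 2 * φ q ∂μ + (∫ q, φ q ∂μ) * ‖x - c‖ ^ 2 := by
  rw [integral_norm_sub_sq_mul hφ hφq hφq2, integral_norm_sub_sq_mul hφ hφq hφq2, hc,
    real_inner_smul_right, real_inner_smul_right, real_inner_self_eq_norm_sq, norm_sub_sq_real]
  ring

end SecondMoment

theorem locational_cost_decreases_along_controller_general
    {E : Type*} [NormedAddCommGroup E] [InnerProductSpace ℝ E]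
    [FiniteDimensional ℝ E] [MeasurableSpace E] [BorelSpace E]
    (W : Set E)
    (φ : E → ℝ)
    (hφint : IntegrableOn φ W)
    (hφqint : IntegrableOn (fun q => φ q • q) W)
    (hφq2int : IntegrableOn (fun q => φ q * ‖q‖ ^ 2) W)
    (M : ℝ) (hM : M = ∫ q in W, φ q) (hMpos : 0 < M)
    (C : E) (hC : C = M⁻¹ • ∫ q in W, φ q • q)
    (kp : ℝ) (hkp : 0 ≤ kp)
    (p : ℝ → E) (hp : ∀ t : ℝ, HasDerivAt p (kp • (C - p t)) t)
    (h : ℝ → ℝ)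
    (hh : ∀ t : ℝ, h t = ∫ q in W, (1 / 2 : ℝ) * ‖q - p t‖ ^ 2 * φ q) :
    (∀ t : ℝ, HasDerivAt h (-kp * M * ‖C - p t‖ ^ 2) t) ∧ Antitone h := by
  have hcentroid : ∫ q in W, φ q • q = (∫ q in W, φ q) • C := by
    rw [← hM, hC, smul_smul, mul_inv_cancel₀ hMpos.ne', one_smul]
  have hh_eq : h = fun t => (1 / 2 : ℝ) * (∫ q in W, ‖q - C‖ ^ 2 * φ q)
      + M / 2 * ‖p t - C‖ ^ 2 := by
    funext t
    simp_rw [hh, mul_assoc, integral_const_mul]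
    rw [integral_norm_sub_sq_mul_eq_of_centroid hφint hφqint hφq2int hcentroid, ← hM]
    ring
  have hderiv : ∀ t, HasDerivAt h (-kp * M * ‖C - p t‖ ^ 2) t := fun t => by
    rw [hh_eq]
    refine ((((hp t).sub_const C).norm_sq.const_mul (M / 2)).const_add _).congr_deriv ?_
    rw [inner_smul_right, ← neg_sub C (p t), inner_neg_left, real_inner_self_eq_norm_sq]
    ring
  exact ⟨hderiv, antitone_of_hasDerivAt_nonpos hderiv fun t => mul_nonpos_of_nonpos_of_nonneg
    (mul_nonpos_of_nonpos_of_nonneg (neg_nonpos.mpr hkp) hMpos.le) (sq_nonneg _)⟩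

/-- Lyapunov decrease of the single-cell locational cost along the
centroid-seeking controller ṗ = k_p (C − p) (Theorem 2 of the paper):
h'(t) = −k_p M ‖C − p(t)‖², so h is nonincreasing. -/
theorem locational_cost_decreases_along_controller
    {E : Type*} [NormedAddCommGroup E] [InnerProductSpace ℝ E]
    [FiniteDimensional ℝ E] [MeasurableSpace E] [BorelSpace E]
    (W : Set E) (hW : MeasurableSet W)
    (φ : E → ℝ) (hφ : ∀ q, 0 ≤ φ q)
    (hφint : IntegrableOn φ W)
    (hφqint : IntegrableOn (fun q => φ q • q) W)
    (hφq2int : IntegrableOn (fun q => φ q * ‖q‖ ^ 2) W)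
    (M : ℝ) (hM : M = ∫ q in W, φ q) (hMpos : 0 < M)
    (C : E) (hC : C = M⁻¹ • ∫ q in W, φ q • q)
    (kp : ℝ) (hkp : 0 ≤ kp)
    (p : ℝ → E) (hp : ∀ t : ℝ, HasDerivAt p (kp • (C - p t)) t)
    (h : ℝ → ℝ)
    (hh : ∀ t : ℝ, h t = ∫ q in W, (1 / 2 : ℝ) * ‖q - p t‖ ^ 2 * φ q) :
    (∀ t : ℝ, HasDerivAt h (-kp * M * ‖C - p t‖ ^ 2) t) ∧ Antitone h :=
  locational_cost_decreases_along_controller_general W φ hφint hφqint hφq2int M hM hMpos C hC kp hkp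
    p hp h hh
end
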